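/- arXiv:2208.13554 — 5 statements merged into one kernel-verified Lean document; each statement's English description precedes it below -/
import Mathlib

section
/- Let f : X → Z be a continuous map of metric spaces with X compact and f locally injective. Then each point z in f(X) has an open neighborhood U such that the restriction of f to each connected component of f⁻¹(U) is injective. -/
/-!
The fibre `F = f⁻¹{z}` is compact and, by local injectivity, discrete, hence finite. Its points
therefore have pairwise disjoint open neighbourhoods `W x` on which `f` is injective. Since `f` is a
closed map, some open `U ∋ z` has `f⁻¹ U ⊆ ⋃ W x`; a connected component of `f⁻¹ U` cannot meet two
of the disjoint open sets `W x`, so it lies in one of them, where `f` is injective.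
-/

open Set Topology

section

variable {X Z : Type*} [TopologicalSpace X]

def LocallyInjective (f : X → Z) : Prop :=
  ∀ x, ∃ U ∈ 𝓝 x, InjOn f U

namespace LocallyInjective

variable {f : X → Z}

theorem isDiscrete_preimage_singleton (hf : LocallyInjective f) (z : Z) :
    IsDiscrete (f ⁻¹' {z}) := by
  refine IsDiscrete.of_nhdsWithin fun x hx => ?_
  obtain ⟨U, hU, hinj⟩ := hf x
  refine Filter.le_pure_iff.2 (Filter.mem_of_superset (inter_mem_nhdsWithin _ hU) ?_)
  rintro y ⟨hy, hyU⟩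
  exact hinj hyU (mem_of_mem_nhds hU) (hy.trans hx.symm)

theorem finite_preimage_singleton [CompactSpace X] [TopologicalSpace Z] [T1Space Z] (hf : LocallyInjective f)
    (hcont : Continuous f) (z : Z) : (f ⁻¹' {z}).Finite :=
  (isClosed_singleton.preimage hcont).isCompact.finite (hf.isDiscrete_preimage_singleton z)

theorem exists_pairwiseDisjoint_isOpen_injOn [T2Space X] (hf : LocallyInjective f) {s : Set X}
    (hs : s.Finite) :
    ∃ W : X → Set X, (∀ x ∈ s, x ∈ W x) ∧ (∀ x, IsOpen (W x)) ∧ (∀ x, InjOn f (W x)) ∧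
      s.PairwiseDisjoint W := by
  obtain ⟨O, hO, hdisj⟩ := hs.t2_separation
  choose U hU hinj using hf
  refine ⟨fun x => O x ∩ interior (U x), fun x _ => ⟨(hO x).1, mem_interior_iff_mem_nhds.2 (hU x)⟩,
    fun x => (hO x).2.inter isOpen_interior,
    fun x => (hinj x).mono (inter_subset_right.trans interior_subset), ?_⟩
  exact hdisj.mono fun x => inter_subset_left

end LocallyInjective

theorem IsClosedMap.exists_isOpen_preimage_subset [TopologicalSpace Z] {f : X → Z} (hf : IsClosedMap f) {z : Z}
    {T : Set X} (hT : IsOpen T) (hzT : f ⁻¹' {z} ⊆ T) :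
    ∃ V, IsOpen V ∧ z ∈ V ∧ f ⁻¹' V ⊆ T := by
  refine ⟨(f '' Tᶜ)ᶜ, (hf _ hT.isClosed_compl).isOpen_compl, ?_, fun x hx => ?_⟩
  · rintro ⟨x, hx, rfl⟩
    exact hx (hzT rfl)
  · by_contra h
    exact hx ⟨x, h, rfl⟩

theorem IsPreconnected.exists_subset_of_subset_biUnion {ι : Type*} {s : Set X} {t : Set ι}
    {W : ι → Set X} (hs : IsPreconnected s) (hne : s.Nonempty) (hW : ∀ i ∈ t, IsOpen (W i))
    (hdisj : t.PairwiseDisjoint W) (hst : s ⊆ ⋃ i ∈ t, W i) : ∃ i ∈ t, s ⊆ W i := by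
  obtain ⟨x, hx⟩ := hne
  obtain ⟨a, ha, hxa⟩ := mem_iUnion₂.1 (hst hx)
  refine ⟨a, ha, hs.subset_left_of_subset_union (v := ⋃ i ∈ t \ {a}, W i) (hW a ha)
    (isOpen_biUnion fun i hi => hW i hi.1) ?_ (fun y hy => ?_) ⟨x, hx, hxa⟩⟩
  · exact disjoint_iUnion₂_right.2 fun i hi => hdisj ha hi.1 (Ne.symm hi.2)
  · obtain ⟨i, hi, hyi⟩ := mem_iUnion₂.1 (hst hy)
    rcases eq_or_ne i a with rfl | hia
    · exact Or.inl hyi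
    · exact Or.inr (mem_biUnion ⟨hi, hia⟩ hyi)

end

theorem stmt_1 {X Z : Type*} [MetricSpace X] [MetricSpace Z] [CompactSpace X]
    (f : X → Z) (hf : Continuous f)
    (hloc : ∀ x : X, ∃ U ∈ nhds x, Set.InjOn f U) :
    ∀ z ∈ Set.range f, ∃ U : Set Z, IsOpen U ∧ z ∈ U ∧
      ∀ x ∈ f ⁻¹' U, Set.InjOn f (connectedComponentIn (f ⁻¹' U) x) := by
  have hloc : LocallyInjective f := hloc
  intro z _
  obtain ⟨W, hmemW, hW, hinjW, hdisjW⟩ :=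
    hloc.exists_pairwiseDisjoint_isOpen_injOn (hloc.finite_preimage_singleton hf z)
  obtain ⟨V, hV, hzV, hVW⟩ := hf.isClosedMap.exists_isOpen_preimage_subset
    (isOpen_biUnion fun x _ => hW x) fun x hx => mem_biUnion hx (hmemW x hx)
  refine ⟨V, hV, hzV, fun x hx => ?_⟩
  obtain ⟨a, -, ha⟩ := isPreconnected_connectedComponentIn.exists_subset_of_subset_biUnion
    ⟨x, mem_connectedComponentIn hx⟩ (fun a _ => hW a) hdisjW
    ((connectedComponentIn_subset _ _).trans hVW)
  exact (hinjW a).mono ha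
end

section
/- Let X be a topological space, k a positive integer, and (A₁, …, A_k) a k-tuple of closed subsets of X, at least one of which is nonempty. Call a point P in A := A₁ ∪ ⋯ ∪ A_k 'properly covered' if there is a neighborhood U of P such that all nonempty sets among U ∩ A₁, …, U ∩ A_k coincide. Then the set of properly covered points is nonempty, open in A, and dense in A. -/
/-!
Given an open `V` meeting `⋃ i, A i`, choose `Q ∈ V ∩ ⋃ i, A i` whose index set
`{i | Q ∈ A i}` is minimal for inclusion (there are finitely many indices), and remove from `V`
the closed sets not containing `Q`. On what is left, every covered point has an index set
contained in that of `Q`, hence equal to it by minimality; a region where all covered points lie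
in exactly the same sets is properly covered. Properly covered points are therefore dense in
`⋃ i, A i`, and the condition "has a properly covered neighbourhood" is open.
-/

open Set Filter Topology

theorem isOpen_setOf_exists_mem_nhds {X : Type*} [TopologicalSpace X] (p : Set X → Prop) :
    IsOpen {x | ∃ U ∈ 𝓝 x, p U} :=
  isOpen_iff_mem_nhds.2 fun _ ⟨U, hU, hpU⟩ =>
    mem_of_superset (eventually_mem_nhds_iff.2 hU) fun _ hy => ⟨U, hy, hpU⟩

def ProperlyCovers {X ι : Type*} (A : ι → Set X) (U : Set X) : Prop :=
  ∀ i j, (U ∩ A i).Nonempty → (U ∩ A j).Nonempty → U ∩ A i = U ∩ A j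

def properlyCovered {X ι : Type*} [TopologicalSpace X] (A : ι → Set X) : Set X :=
  {P ∈ ⋃ i, A i | ∃ U ∈ 𝓝 P, ProperlyCovers A U}

section ProperCover

variable {X ι : Type*} {A : ι → Set X}

theorem properlyCovers_of_forall_setOf_mem_eq {U : Set X} {s : Set ι}
    (h : ∀ x ∈ U, ∀ i, x ∈ A i → {m | x ∈ A m} = s) : ProperlyCovers A U := by
  have mem_s : ∀ i, (U ∩ A i).Nonempty → i ∈ s := fun i ⟨x, hxU, hxi⟩ =>
    h x hxU i hxi ▸ hxi
  have mem_of_mem : ∀ {i j}, (U ∩ A j).Nonempty → ∀ z ∈ U ∩ A i, z ∈ U ∩ A j :=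
    fun hj z ⟨hzU, hzi⟩ => ⟨hzU, show _ ∈ {m | z ∈ A m} from h z hzU _ hzi ▸ mem_s _ hj⟩
  exact fun i j hi hj => Subset.antisymm (mem_of_mem hj) (mem_of_mem hi)

theorem exists_mem_properlyCovered [TopologicalSpace X] [Finite ι] (hA : ∀ i, IsClosed (A i))
    {V : Set X} (hV : IsOpen V) (hVA : (V ∩ ⋃ i, A i).Nonempty) :
    ∃ P ∈ V, P ∈ properlyCovered A := by
  obtain ⟨Q, ⟨hQV, hQA⟩, hQmin⟩ :=
    (wellFounded_lt.onFun (f := fun x => {i | x ∈ A i})).has_min _ hVA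
  set U := V ∩ ⋂ i ∈ {i | Q ∉ A i}, (A i)ᶜ
  have hU : IsOpen U :=
    hV.inter ((toFinite _).isOpen_biInter fun i _ => (hA i).isOpen_compl)
  have hQU : Q ∈ U := ⟨hQV, mem_iInter₂.2 fun _ hi => hi⟩
  refine ⟨Q, hQV, hQA, U, hU.mem_nhds hQU,
    properlyCovers_of_forall_setOf_mem_eq (s := {m | Q ∈ A m}) ?_⟩
  intro x ⟨hxV, hxQ⟩ i hxi
  have hsub : {m | x ∈ A m} ⊆ {m | Q ∈ A m} := fun m hm => by
    by_contra hQm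
    exact mem_iInter₂.1 hxQ m hQm hm
  exact hsub.eq_of_not_ssubset (hQmin x ⟨hxV, mem_iUnion.2 ⟨i, hxi⟩⟩)

end ProperCover

theorem stmt_3_general {X : Type*} [TopologicalSpace X] (k : ℕ)
    (A : Fin k → Set X) (hclosed : ∀ i, IsClosed (A i))
    (hne : ∃ i, (A i).Nonempty) :
    (⋃ i, A i ∩ {P | ∃ U ∈ nhds P, ∀ i j : Fin k,
        (U ∩ A i).Nonempty → (U ∩ A j).Nonempty → U ∩ A i = U ∩ A j}).Nonempty ∧
    (∃ W : Set X, IsOpen W ∧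
      {P ∈ ⋃ i, A i | ∃ U ∈ nhds P, ∀ i j : Fin k,
        (U ∩ A i).Nonempty → (U ∩ A j).Nonempty → U ∩ A i = U ∩ A j} = W ∩ ⋃ i, A i) ∧
    (⋃ i, A i) ⊆ closure {P ∈ ⋃ i, A i | ∃ U ∈ nhds P, ∀ i j : Fin k,
        (U ∩ A i).Nonempty → (U ∩ A j).Nonempty → U ∩ A i = U ∩ A j} := by
  have dense : (⋃ i, A i) ⊆ closure (properlyCovered A) := fun P hP =>
    mem_closure_iff.2 fun V hV hPV => exists_mem_properlyCovered hclosed hV ⟨P, hPV, hP⟩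
  refine ⟨?_, ⟨_, isOpen_setOf_exists_mem_nhds (ProperlyCovers A), inter_comm _ _⟩, dense⟩
  obtain ⟨i, P, hP⟩ := hne
  obtain ⟨Q, -, hQA, hQ⟩ :=
    exists_mem_properlyCovered hclosed isOpen_univ ⟨P, trivial, mem_iUnion.2 ⟨i, hP⟩⟩
  rw [← iUnion_inter]
  exact ⟨Q, hQA, hQ⟩

theorem stmt_3 {X : Type*} [TopologicalSpace X] (k : ℕ) (hk : 0 < k)
    (A : Fin k → Set X) (hclosed : ∀ i, IsClosed (A i))
    (hne : ∃ i, (A i).Nonempty) :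
    (⋃ i, A i ∩ {P | ∃ U ∈ nhds P, ∀ i j : Fin k,
        (U ∩ A i).Nonempty → (U ∩ A j).Nonempty → U ∩ A i = U ∩ A j}).Nonempty ∧
    (∃ W : Set X, IsOpen W ∧
      {P ∈ ⋃ i, A i | ∃ U ∈ nhds P, ∀ i j : Fin k,
        (U ∩ A i).Nonempty → (U ∩ A j).Nonempty → U ∩ A i = U ∩ A j} = W ∩ ⋃ i, A i) ∧
    (⋃ i, A i) ⊆ closure {P ∈ ⋃ i, A i | ∃ U ∈ nhds P, ∀ i j : Fin k,
        (U ∩ A i).Nonempty → (U ∩ A j).Nonempty → U ∩ A i = U ∩ A j} :=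
  stmt_3_general k A hclosed hne
end

section
/- Let K be a compact subset of a Euclidean space E (e.g., ℝⁿ). If K is not convex, then there exists a nondegenerate closed segment in E that intersects K exactly in its two endpoints. -/
/-! A non-convex closed set `K` contains points `a`, `b` and misses some point `lineMap a b c`
of the segment between them. Along the line through `a` and `b`, the closed set of parameters
landing in `K` contains `0` and `1` but not `c`; the largest parameter in it below `c` and the
smallest one above `c` bound a gap, whose image is the required segment. -/

open Set

theorem IsClosed.exists_Icc_inter_eq_pair {T : Set ℝ} (hT : IsClosed T) {x y c : ℝ}
    (hx : x ∈ T) (hy : y ∈ T) (hxc : x ≤ c) (hcy : c ≤ y) (hc : c ∉ T) :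
    ∃ s u, s < u ∧ Icc s u ∩ T = {s, u} := by
  have hbddl : BddAbove (T ∩ Iic c) := ⟨c, fun _ ht => ht.2⟩
  have hbddu : BddBelow (T ∩ Ici c) := ⟨c, fun _ ht => ht.2⟩
  obtain ⟨hsT, hsc⟩ : sSup (T ∩ Iic c) ∈ T ∩ Iic c :=
    (hT.inter isClosed_Iic).csSup_mem ⟨x, hx, hxc⟩ hbddl
  obtain ⟨huT, hcu⟩ : sInf (T ∩ Ici c) ∈ T ∩ Ici c :=
    (hT.inter isClosed_Ici).csInf_mem ⟨y, hy, hcy⟩ hbddu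
  have hsu : sSup (T ∩ Iic c) < sInf (T ∩ Ici c) :=
    (hsc.lt_of_ne (ne_of_mem_of_not_mem hsT hc)).trans_le hcu
  refine ⟨_, _, hsu, Set.ext fun t => ⟨?_, ?_⟩⟩
  · rintro ⟨⟨hst, htu⟩, htT⟩
    rcases le_total t c with htc | hct
    · exact Or.inl (le_antisymm (le_csSup hbddl ⟨htT, htc⟩) hst)
    · exact Or.inr (le_antisymm htu (csInf_le hbddu ⟨htT, hct⟩))
  · rintro (rfl | rfl)
    · exact ⟨left_mem_Icc.2 hsu.le, hsT⟩
    · exact ⟨right_mem_Icc.2 hsu.le, huT⟩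

theorem IsClosed.exists_segment_inter_eq_pair_of_not_convex {E : Type*} [AddCommGroup E]
    [Module ℝ E] [TopologicalSpace E] [IsTopologicalAddGroup E] [ContinuousSMul ℝ E]
    {K : Set E} (hK : IsClosed K) (hnc : ¬Convex ℝ K) :
    ∃ p q, p ≠ q ∧ segment ℝ p q ∩ K = {p, q} := by
  simp only [convex_iff_segment_subset, not_forall, not_subset, exists_prop] at hnc
  obtain ⟨a, ha, b, hb, z, hz, hzK⟩ := hnc
  rw [segment_eq_image_lineMap] at hz
  obtain ⟨c, ⟨hc0, hc1⟩, rfl⟩ := hz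
  have hab : a ≠ b := by
    rintro rfl
    exact hzK (by rwa [AffineMap.lineMap_same_apply])
  set f : ℝ →ᵃ[ℝ] E := AffineMap.lineMap a b
  obtain ⟨s, u, hsu, hgap⟩ := (hK.preimage AffineMap.lineMap_continuous).exists_Icc_inter_eq_pair
    (x := 0) (y := 1) (by simpa [f] using ha) (by simpa [f] using hb) hc0 hc1 hzK
  refine ⟨f s, f u, (AffineMap.lineMap_injective ℝ hab).ne hsu.ne, ?_⟩
  rw [← image_segment, segment_eq_Icc hsu.le, ← image_inter_preimage, hgap, image_pair]

theorem stmt_4 {n : ℕ} (K : Set (EuclideanSpace ℝ (Fin n)))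
    (hK : IsCompact K) (hnc : ¬ Convex ℝ K) :
    ∃ p q : EuclideanSpace ℝ (Fin n), p ≠ q ∧
      segment ℝ p q ∩ K = {p, q} :=
  hK.isClosed.exists_segment_inter_eq_pair_of_not_convex hnc
end

section
/- Let O be a nonempty bounded open connected subset of ℝ². Call a closed Euclidean disk B contained in the closure of O a 'good disk' if its boundary meets ∂O in at least 2 points; points of B ∩ ∂O for good disks B are 'good points'. Then the set of good points is dense in ∂O. -/
/-!
Let `y ∈ ∂O` be the nearest boundary point of some `x ∈ O` (such `y` are dense in `∂O`), and for
`0 ≤ λ < 1` let `c` maximise `Φ(q) = d(q, Oᶜ) - λ |q - y|` over `cl O`; since `Φ(x) > 0`, the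
centre `c` lies in `O`. The disk `B(c, d(c, Oᶜ))` is good: if it touched `∂O` only at `w₀`,
moving `c` away from `w₀` would raise `d(·, Oᶜ)` at rate `1` but `λ |· - y|` only at rate `λ`.
Moving `c` towards `y` shows likewise that some contact point `w` satisfies
`|w - y|² ≤ 2 (1 - λ) |c - y|²`, which is small as `λ → 1`.
-/

open Metric Set Filter Topology Bornology
open scoped RealInnerProductSpace

variable {E : Type*}

def goodPoints [PseudoMetricSpace E] (O : Set E) : Set E :=
  {y | ∃ (x : E) (r : ℝ), x ∈ O ∧ closedBall x r ⊆ closure O ∧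
    (closedBall x r ∩ frontier O).Nontrivial ∧ y ∈ closedBall x r ∩ frontier O}

lemma exists_isMaxOn_infDist_sub_mul_dist [PseudoMetricSpace E] [ProperSpace E] {O : Set E}
    (hO : IsOpen O) (hbdd : IsBounded O) {x y : E} {l : ℝ}
    (hx : x ∈ O) (hy : y ∉ O) (hxy : dist x y = infDist x Oᶜ) (hl₀ : 0 ≤ l) (hl₁ : l < 1) :
    ∃ c ∈ O, IsMaxOn (fun q => infDist q Oᶜ - l * dist q y) O c ∧
      l * dist c y < infDist c Oᶜ := by
  have hcont : Continuous fun q => infDist q Oᶜ - l * dist q y :=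
    (continuous_infDist_pt _).sub (continuous_const.mul (continuous_id.dist continuous_const))
  obtain ⟨c, -, hmax⟩ :=
    hbdd.isCompact_closure.exists_isMaxOn ⟨x, subset_closure hx⟩ hcont.continuousOn
  have hx₀ : 0 < infDist x Oᶜ :=
    (hO.isClosed_compl.notMem_iff_infDist_pos ⟨y, hy⟩).1 (not_not.2 hx)
  have hpos : l * dist c y < infDist c Oᶜ := by
    have : infDist x Oᶜ - l * dist x y ≤ infDist c Oᶜ - l * dist c y := hmax (subset_closure hx)
    rw [hxy] at this
    nlinarith
  refine ⟨c, ?_, hmax.on_subset subset_closure, hpos⟩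
  by_contra hcO
  rw [infDist_zero_of_mem hcO] at hpos
  linarith [mul_nonneg hl₀ (dist_nonneg (x := c) (y := y))]

variable [NormedAddCommGroup E] [InnerProductSpace ℝ E]

lemma inner_le_of_norm_add_smul_le {a e : E} {F β s : ℝ} (hs : 0 < s) (hF : 0 ≤ F)
    (ha : F ≤ ‖a‖) (h : ‖a + s • e‖ ≤ F + β * s) :
    ⟪a, e⟫ ≤ β * F + (β ^ 2 - ‖e‖ ^ 2) * s / 2 := by
  have hsq : ‖a + s • e‖ ^ 2 ≤ (F + β * s) ^ 2 := pow_le_pow_left₀ (norm_nonneg _) h 2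
  rw [norm_add_sq_real, real_inner_smul_right, norm_smul, Real.norm_of_nonneg hs.le] at hsq
  have hF2 : F ^ 2 ≤ ‖a‖ ^ 2 := pow_le_pow_left₀ hF ha 2
  have : s * (2 * ⟪a, e⟫) ≤ s * (2 * β * F + (β ^ 2 - ‖e‖ ^ 2) * s) := by nlinarith
  nlinarith [le_of_mul_le_mul_left this hs]

/-- A one-sided bound on the directional derivative of `infDist · S` at `c` in direction `e`
is witnessed by a nearest point of `S`. -/
theorem IsClosed.exists_infDist_eq_dist_inner_le [ProperSpace E] {S : Set E} (hS : IsClosed S)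
    (hne : S.Nonempty) {c e : E} {β : ℝ}
    (h : ∀ᶠ s in 𝓝[>] 0, infDist (c + s • e) S ≤ infDist c S + β * s) :
    ∃ w ∈ S, dist c w = infDist c S ∧ ⟪c - w, e⟫ ≤ β * infDist c S := by
  set F := infDist c S
  set t : ℕ → ℝ := fun n => 1 / ((n : ℝ) + 1)
  have ht_pos : ∀ n, 0 < t n := fun n => Nat.one_div_pos_of_nat
  have ht_le : ∀ n, t n ≤ 1 := fun n => by simpa [t] using Nat.one_div_le_one_div (α := ℝ) n.zero_le
  have ht : Tendsto t atTop (𝓝 0) := tendsto_one_div_add_atTop_nhds_zero_nat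
  choose w hwS hwd using fun n => hS.exists_infDist_eq_dist hne (c + t n • e)
  have hw_mem : ∀ n, w n ∈ closedBall c (F + 2 * ‖e‖) := fun n => by
    have hstep : dist (c + t n • e) c ≤ ‖e‖ := by
      rw [dist_eq_norm, add_sub_cancel_left, norm_smul, Real.norm_of_nonneg (ht_pos n).le]
      exact mul_le_of_le_one_left (norm_nonneg e) (ht_le n)
    calc dist (w n) c ≤ dist (w n) (c + t n • e) + dist (c + t n • e) c := dist_triangle _ _ _
      _ ≤ (F + dist (c + t n • e) c) + dist (c + t n • e) c := by
          gcongr; rw [dist_comm, ← hwd]; exact infDist_le_infDist_add_dist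
      _ ≤ F + 2 * ‖e‖ := by linarith
  obtain ⟨w₀, -, φ, hφ, hlim⟩ := (isCompact_closedBall c _).tendsto_subseq hw_mem
  have htφ : Tendsto (t ∘ φ) atTop (𝓝 0) := ht.comp hφ.tendsto_atTop
  have hpt : Tendsto (fun n => c + t (φ n) • e) atTop (𝓝 c) := by
    simpa using tendsto_const_nhds.add (htφ.smul_const e)
  have hdist : dist c w₀ = F := by
    refine tendsto_nhds_unique ((hpt.dist hlim).congr fun n => (hwd (φ n)).symm) ?_
    exact ((continuous_infDist_pt S).tendsto c).comp hpt
  refine ⟨w₀, hS.mem_of_tendsto hlim (Eventually.of_forall fun n => hwS _), hdist, ?_⟩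
  have hineq : ∀ᶠ n in atTop,
      ⟪c - w (φ n), e⟫ ≤ β * F + (β ^ 2 - ‖e‖ ^ 2) * t (φ n) / 2 := by
    have htφ' : Tendsto (t ∘ φ) atTop (𝓝[>] 0) :=
      tendsto_nhdsWithin_iff.2 ⟨htφ, Eventually.of_forall fun n => ht_pos (φ n)⟩
    filter_upwards [htφ'.eventually h] with n hn
    refine inner_le_of_norm_add_smul_le (ht_pos _) infDist_nonneg ?_ ?_
    · rw [← dist_eq_norm]; exact infDist_le_dist_of_mem (hwS _)
    · rw [Function.comp_apply, hwd, dist_eq_norm] at hn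
      rwa [sub_add_eq_add_sub]
  have hbound :
      Tendsto (fun n => β * F + (β ^ 2 - ‖e‖ ^ 2) * t (φ n) / 2) atTop (𝓝 (β * F)) := by
    simpa using tendsto_const_nhds.add ((htφ.const_mul (β ^ 2 - ‖e‖ ^ 2)).div_const 2)
  exact le_of_tendsto_of_tendsto ((tendsto_const_nhds.sub hlim).inner tendsto_const_nhds)
    hbound hineq

lemma mem_closedBall_inter_frontier_of_dist_eq_infDist {O : Set E} (hO : IsOpen O) {c w : E}
    (hc : c ∈ O) (hw : w ∉ O) (hd : dist c w = infDist c Oᶜ) :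
    w ∈ closedBall c (infDist c Oᶜ) ∩ frontier O := by
  have hwB : w ∈ closedBall c (infDist c Oᶜ) := mem_closedBall'.2 hd.le
  exact ⟨hwB, hO.frontier_eq ▸ ⟨closedBall_infDist_compl_subset_closure hc hwB, hw⟩⟩

section Maximizer

variable {O : Set E} {c y : E} {l : ℝ}

lemma eventually_infDist_add_smul_le (hO : IsOpen O) (hc : c ∈ O)
    (hmax : IsMaxOn (fun q => infDist q Oᶜ - l * dist q y) O c) (e : E) :
    ∀ᶠ s in 𝓝[>] (0 : ℝ),
      infDist (c + s • e) Oᶜ ≤ infDist c Oᶜ + l * (dist (c + s • e) y - dist c y) := by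
  have hlim : Tendsto (fun s : ℝ => c + s • e) (𝓝 0) (𝓝 c) :=
    (continuous_const.add (continuous_id.smul continuous_const)).tendsto' 0 c (by simp)
  filter_upwards [nhdsWithin_le_nhds (hlim.eventually (hO.mem_nhds hc))] with s hs
  have : infDist (c + s • e) Oᶜ - l * dist (c + s • e) y ≤ infDist c Oᶜ - l * dist c y := hmax hs
  linarith

lemma nontrivial_closedBall_inter_frontier [ProperSpace E] (hO : IsOpen O) (hc : c ∈ O)
    (hy : y ∉ O)
    (hmax : IsMaxOn (fun q => infDist q Oᶜ - l * dist q y) O c) (hl₀ : 0 ≤ l) (hl₁ : l < 1) :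
    (closedBall c (infDist c Oᶜ) ∩ frontier O).Nontrivial := by
  set f := infDist c Oᶜ
  have hf : 0 < f := (hO.isClosed_compl.notMem_iff_infDist_pos ⟨y, hy⟩).1 (not_not.2 hc)
  obtain ⟨w₀, hw₀, hw₀d⟩ := hO.isClosed_compl.exists_infDist_eq_dist ⟨y, hy⟩ c
  have hbound : ∀ᶠ s in 𝓝[>] 0, infDist (c + s • (c - w₀)) Oᶜ ≤ f + l * f * s := by
    filter_upwards [eventually_infDist_add_smul_le hO hc hmax (c - w₀), self_mem_nhdsWithin]
      with s hs (hs₀ : 0 < s)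
    have hstep : dist (c + s • (c - w₀)) c = s * f := by
      rw [dist_eq_norm, add_sub_cancel_left, norm_smul, Real.norm_of_nonneg hs₀.le,
        ← dist_eq_norm, ← hw₀d]
    have := dist_triangle (c + s • (c - w₀)) c y
    nlinarith
  obtain ⟨w, hw, hwd, hwi⟩ := hO.isClosed_compl.exists_infDist_eq_dist_inner_le ⟨y, hy⟩ hbound
  refine ⟨w, mem_closedBall_inter_frontier_of_dist_eq_infDist hO hc hw hwd,
    w₀, mem_closedBall_inter_frontier_of_dist_eq_infDist hO hc hw₀ hw₀d.symm, ?_⟩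
  rintro rfl
  rw [real_inner_self_eq_norm_sq, ← dist_eq_norm, hwd] at hwi
  change f ^ 2 ≤ l * f * f at hwi
  nlinarith [mul_pos hf hf]

lemma exists_mem_closedBall_inter_frontier_dist_sq_le [ProperSpace E] (hO : IsOpen O) (hc : c ∈ O)
    (hy : y ∉ O)
    (hmax : IsMaxOn (fun q => infDist q Oᶜ - l * dist q y) O c) :
    ∃ w ∈ closedBall c (infDist c Oᶜ) ∩ frontier O,
      dist w y ^ 2 ≤ infDist c Oᶜ ^ 2 - 2 * l * dist c y * infDist c Oᶜ + dist c y ^ 2 := by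
  set f := infDist c Oᶜ
  set D := dist c y
  have hbound : ∀ᶠ s in 𝓝[>] 0, infDist (c + s • (y - c)) Oᶜ ≤ f + -(l * D) * s := by
    filter_upwards [eventually_infDist_add_smul_le hO hc hmax (y - c), Ioo_mem_nhdsGT one_pos]
      with s hs hs₁
    have hstep : dist (c + s • (y - c)) y = (1 - s) * D := by
      rw [dist_eq_norm, show c + s • (y - c) - y = (1 - s) • (c - y) by module, norm_smul,
        Real.norm_of_nonneg (by linarith [hs₁.2]), ← dist_eq_norm]
    rw [hstep] at hs
    linarith
  obtain ⟨w, hw, hwd, hwi⟩ := hO.isClosed_compl.exists_infDist_eq_dist_inner_le ⟨y, hy⟩ hbound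
  refine ⟨w, mem_closedBall_inter_frontier_of_dist_eq_infDist hO hc hw hwd, ?_⟩
  have hexpand : dist w y ^ 2 = dist c w ^ 2 + 2 * ⟪c - w, y - c⟫ + D ^ 2 := by
    rw [dist_eq_norm, show w - y = -((c - w) + (y - c)) by abel, norm_neg, norm_add_sq_real,
      ← dist_eq_norm, ← dist_eq_norm, dist_comm y]
  rw [hexpand, hwd]
  linarith

end Maximizer

theorem exists_mem_goodPoints_dist_lt [ProperSpace E] {O : Set E} (hO : IsOpen O)
    (hbdd : IsBounded O) {x y : E} (hx : x ∈ O) (hy : y ∉ O) (hxy : dist x y = infDist x Oᶜ)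
    {ε : ℝ} (hε : 0 < ε) :
    ∃ w ∈ goodPoints O, dist w y < ε := by
  obtain ⟨R, hR⟩ := hbdd.subset_closedBall y
  have hsmall : ∀ᶠ l in 𝓝[<] (1 : ℝ), 2 * (1 - l) * R ^ 2 < ε ^ 2 := by
    refine nhdsWithin_le_nhds (Tendsto.eventually_lt_const (by positivity) ?_)
    simpa using (by fun_prop : Continuous fun l : ℝ => 2 * (1 - l) * R ^ 2).tendsto 1
  obtain ⟨l, hlε, hl⟩ := (hsmall.and (Ioo_mem_nhdsLT one_pos)).exists
  obtain ⟨c, hc, hmax, hpos⟩ := exists_isMaxOn_infDist_sub_mul_dist hO hbdd hx hy hxy hl.1.le hl.2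
  obtain ⟨w, hw, hwy⟩ := exists_mem_closedBall_inter_frontier_dist_sq_le hO hc hy hmax
  refine ⟨w, ⟨c, _, hc, closedBall_infDist_compl_subset_closure hc,
    nontrivial_closedBall_inter_frontier hO hc hy hmax hl.1.le hl.2, hw⟩, ?_⟩
  have hfD : infDist c Oᶜ ≤ dist c y := infDist_le_dist_of_mem hy
  have hsq : dist w y ^ 2 ≤ 2 * (1 - l) * dist c y ^ 2 := by
    -- for `f = infDist c Oᶜ`, `D = dist c y` the gap is `(f - D) * (f - (2l - 1) D)`; `l D < f ≤ D`
    nlinarith [mul_nonneg (sub_nonneg.2 hfD) (show 0 ≤ infDist c Oᶜ - (2 * l - 1) * dist c y by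
      nlinarith [hl.2, dist_nonneg (x := c) (y := y)])]
  refine lt_of_pow_lt_pow_left₀ 2 hε.le (hsq.trans_lt ?_)
  calc 2 * (1 - l) * dist c y ^ 2 ≤ 2 * (1 - l) * R ^ 2 := by
        have : 0 ≤ 1 - l := by linarith [hl.2]
        gcongr
        exact hR hc
    _ < ε ^ 2 := hlε

theorem stmt_8_general (O : Set (EuclideanSpace ℝ (Fin 2)))
    (hbdd : Bornology.IsBounded O)
    (hO : IsOpen O) :
    frontier O ⊆ closure {y | ∃ (x : EuclideanSpace ℝ (Fin 2)) (r : ℝ), x ∈ O ∧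
      Metric.closedBall x r ⊆ closure O ∧
      (Metric.closedBall x r ∩ frontier O).Nontrivial ∧
      y ∈ Metric.closedBall x r ∩ frontier O} := by
  intro z hz
  have hzO : z ∉ O := (hO.frontier_eq ▸ hz).2
  refine Metric.mem_closure_iff.2 fun ε hε => ?_
  obtain ⟨x, hx, hzx⟩ :=
    Metric.mem_closure_iff.1 (frontier_subset_closure hz) (ε / 4) (by positivity)
  obtain ⟨y, hy, hxy⟩ := hO.isClosed_compl.exists_infDist_eq_dist ⟨z, hzO⟩ x
  obtain ⟨w, hw, hwy⟩ := exists_mem_goodPoints_dist_lt hO hbdd hx hy hxy.symm (half_pos hε)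
  have hyx : dist x y ≤ dist x z := hxy ▸ infDist_le_dist_of_mem hzO
  refine ⟨w, hw, ?_⟩
  calc dist z w ≤ dist z x + dist x y + dist y w := dist_triangle4 _ _ _ _
    _ < ε := by linarith [dist_comm x z, dist_comm y w]

theorem stmt_8 (O : Set (EuclideanSpace ℝ (Fin 2)))
    (hne : O.Nonempty) (hbdd : Bornology.IsBounded O)
    (hO : IsOpen O) (hc : IsConnected O) :
    frontier O ⊆ closure {y | ∃ (x : EuclideanSpace ℝ (Fin 2)) (r : ℝ), x ∈ O ∧
      Metric.closedBall x r ⊆ closure O ∧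
      (Metric.closedBall x r ∩ frontier O).Nontrivial ∧
      y ∈ Metric.closedBall x r ∩ frontier O} :=
  stmt_8_general O hbdd hO
end

section
/- Let f : S¹ → ℝ² be a continuous locally injective map (a locally-simple curve). Then the image f(S¹) has empty interior in ℝ². -/
/-!
A continuous injection of the plane into `ℝ` is impossible: deleting a point disconnects an
interval but not the plane. Since a ball is homeomorphic to the plane, no subset of the plane
with nonempty interior embeds in `ℝ`. Each point of the circle has a compact arc neighbourhood
on which `f` is injective; the arc embeds in `ℝ`, and `f` maps it homeomorphically onto its
image, so that image is closed with empty interior. Finitely many arcs cover the circle, so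
`f(S¹)` is meagre and, by Baire, has empty interior.
-/

open Set Topology

section

variable {E : Type*} [NormedAddCommGroup E] [NormedSpace ℝ E]

theorem not_injective_of_one_lt_rank (h : 1 < Module.rank ℝ E) {g : E → ℝ}
    (hg : Continuous g) : ¬ Function.Injective g := by
  intro hinj
  obtain ⟨q, hq⟩ := (isConnected_compl_singleton_of_one_lt_rank h 0).nonempty
  obtain ⟨a, b, hab⟩ : ∃ a b : E, g a < g b := by
    rcases (hinj.ne hq).lt_or_gt with hlt | hlt
    exacts [⟨q, 0, hlt⟩, ⟨0, q, hlt⟩]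
  obtain ⟨m, hma, hmb⟩ := exists_between hab
  obtain ⟨c, -, hc⟩ := isPreconnected_univ.intermediate_value (mem_univ a) (mem_univ b)
    hg.continuousOn ⟨hma.le, hmb.le⟩
  -- Removing `c` does not disconnect `E`, so `m = g c` is still attained off `c`.
  have hac : a ∈ ({c}ᶜ : Set E) := by rintro rfl; exact hma.ne' hc.symm
  have hbc : b ∈ ({c}ᶜ : Set E) := by rintro rfl; exact hmb.ne hc.symm
  obtain ⟨d, hd, hgd⟩ := (isConnected_compl_singleton_of_one_lt_rank h c).isPreconnected
    |>.intermediate_value hac hbc hg.continuousOn ⟨hma.le, hmb.le⟩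
  exact hd (hinj (hgd.trans hc.symm))

theorem interior_eq_empty_of_injective (h : 1 < Module.rank ℝ E) {s : Set E} {g : s → ℝ}
    (hg : Continuous g) (hinj : Function.Injective g) : interior s = ∅ := by
  by_contra hne
  obtain ⟨x, hx⟩ := nonempty_iff_ne_empty.2 hne
  obtain ⟨r, hr, hball⟩ := Metric.mem_nhds_iff.1 (mem_interior_iff_mem_nhds.1 hx)
  let e := OpenPartialHomeomorph.univBall x r
  have he : ∀ y, e y ∈ s := fun y =>
    hball (OpenPartialHomeomorph.univBall_target x hr ▸ e.map_source (by simp [e]))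
  refine not_injective_of_one_lt_rank h (g := fun y => g ⟨e y, he y⟩) ?_ ?_
  · exact hg.comp ((OpenPartialHomeomorph.continuous_univBall x r).subtype_mk he)
  · exact hinj.comp fun y z hyz => e.injOn (by simp [e]) (by simp [e]) (congrArg Subtype.val hyz)

theorem interior_image_eq_empty_of_injOn {X : Type*} [TopologicalSpace X]
    (h : 1 < Module.rank ℝ E) {K : Set X} (hK : IsCompact K) {f : X → E} (hf : ContinuousOn f K)
    (hfK : InjOn f K) {ψ : X → ℝ} (hψ : ContinuousOn ψ K) (hψK : InjOn ψ K) :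
    interior (f '' K) = ∅ := by
  have : CompactSpace K := isCompact_iff_compactSpace.1 hK
  let e := (hf.domRestrict.isClosedEmbedding hfK.injective).toIsEmbedding.toHomeomorph
  rw [← range_domRestrict]
  exact interior_eq_empty_of_injective h (hψ.domRestrict.comp e.symm.continuous)
    (hψK.injective.comp e.symm.injective)

end

theorem isMeagre_range_of_forall_exists_mem_nhds {X Y : Type*} [TopologicalSpace X]
    [CompactSpace X] [TopologicalSpace Y] {f : X → Y}
    (h : ∀ x, ∃ N ∈ 𝓝 x, IsMeagre (f '' N)) : IsMeagre (range f) := by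
  choose N hN hmeagre using h
  obtain ⟨t, -, ht⟩ := isCompact_univ.elim_nhds_subcover N fun x _ => hN x
  refine (isMeagre_biUnion t.countable_toSet fun x _ => hmeagre x).mono ?_
  rintro _ ⟨x, rfl⟩
  obtain ⟨i, hi, hx⟩ := mem_iUnion₂.1 (ht (mem_univ x))
  exact mem_iUnion₂.2 ⟨i, hi, mem_image_of_mem f hx⟩

theorem Circle.exists_mem_nhds_continuousOn_injOn (z : Circle) :
    ∃ U ∈ 𝓝 z, ∃ ψ : Circle → ℝ, ContinuousOn ψ U ∧ InjOn ψ U := by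
  obtain ⟨t, rfl⟩ := Circle.exp_surjective z
  obtain ⟨e, ht, he⟩ := isLocalHomeomorph_circleExp t
  exact ⟨e.target, e.open_target.mem_nhds (he ▸ e.map_source ht), e.symm, e.continuousOn_symm,
    e.symm.injOn⟩

theorem interior_range_eq_empty_of_locally_injOn {X E : Type*} [TopologicalSpace X]
    [CompactSpace X] [LocallyCompactSpace X] [NormedAddCommGroup E] [NormedSpace ℝ E]
    [CompleteSpace E] (h : 1 < Module.rank ℝ E) {f : X → E} (hf : Continuous f)
    (hloc : ∀ x, ∃ U ∈ 𝓝 x, InjOn f U)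
    (hX : ∀ x, ∃ U ∈ 𝓝 x, ∃ ψ : X → ℝ, ContinuousOn ψ U ∧ InjOn ψ U) :
    interior (range f) = ∅ := by
  have hmeagre : IsMeagre (range f) := isMeagre_range_of_forall_exists_mem_nhds fun x => by
    obtain ⟨U, hU, hfU⟩ := hloc x
    obtain ⟨V, hV, ψ, hψ, hψV⟩ := hX x
    obtain ⟨K, hKx, hKUV, hK⟩ := local_compact_nhds (Filter.inter_mem hU hV)
    refine ⟨K, hKx, IsNowhereDense.isMeagre ?_⟩
    rw [(hK.image hf).isClosed.isNowhereDense_iff]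
    exact interior_image_eq_empty_of_injOn h hK hf.continuousOn
      (hfU.mono fun _ hy => (hKUV hy).1) (hψ.mono fun _ hy => (hKUV hy).2)
      (hψV.mono fun _ hy => (hKUV hy).2)
  by_contra hne
  exact not_isMeagre_of_isOpen isOpen_interior (nonempty_iff_ne_empty.2 hne)
    (hmeagre.mono interior_subset)

theorem stmt_10 (f : Circle → ℂ) (hf : Continuous f)
    (hloc : ∀ x : Circle, ∃ U ∈ nhds x, Set.InjOn f U) :
    interior (Set.range f) = ∅ :=
  interior_range_eq_empty_of_locally_injOn (by simp) hf hloc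
    Circle.exists_mem_nhds_continuousOn_injOn
end
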